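/- arXiv:1908.11606 — 4 statements merged into one kernel-verified Lean document; each statement's English description precedes it below -/
import Mathlib

section
/- For v, w ∈ W^I ⊆ S_n one has v ≤ w in Bruhat order if and only if the path λ^v lies weakly below the path λ^w; that is, if and only if hgt_j(λ^v) ≤ hgt_j(λ^w) for every 0 ≤ j ≤ n, where hgt_j(λ) := |i − j| + 2·#{boxes labeled j below λ} is the height of the lattice path of λ at horizontal coordinate j. -/
open scoped Classical

noncomputable section

/-- The simple transposition `s_j` of `S_n` (0-indexed: it swaps positions `j` and `j+1`). -/
def sT (n j : ℕ) : Equiv.Perm (Fin n) :=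
  if h : j + 1 < n then Equiv.swap ⟨j, Nat.lt_of_succ_lt h⟩ ⟨j + 1, h⟩ else 1

/-- The Coxeter length of a permutation, as its number of inversions. -/
def invLen {n : ℕ} (w : Equiv.Perm (Fin n)) : ℕ :=
  (Finset.univ.filter fun p : Fin n × Fin n => p.1 < p.2 ∧ w p.2 < w p.1).card

/-- The parabolic subgroup `W_I ≅ S_i × S_{n-i}` generated by all simple transpositions
except the `i`-th one (1-indexed: we exclude `s_i`, i.e. the 0-indexed `sT n (i-1)`). -/
def WIsub (n i : ℕ) : Subgroup (Equiv.Perm (Fin n)) :=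
  Subgroup.closure {g | ∃ m : ℕ, m + 1 < n ∧ m + 1 ≠ i ∧ g = sT n m}

/-- `W^I`: the minimal length representatives of the cosets `w W_I`. -/
def minRep (n i : ℕ) : Set (Equiv.Perm (Fin n)) :=
  {w | ∀ m : ℕ, m + 1 < n → m + 1 ≠ i → invLen w < invLen (w * sT n m)}

/-- The path `λ^w = w · (↘,…,↘,↗,…,↗)` associated to `w`; `true` encodes `↘`,
`false` encodes `↗`; the symmetric group permutes positions. -/
def toPath {n : ℕ} (i : ℕ) (w : Equiv.Perm (Fin n)) : Fin n → Bool :=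
  fun k => decide (((w⁻¹ k : Fin n) : ℕ) < i)

/-- `Λ_{n,i}`: the set of `n`-tuples of `↗`/`↘` with exactly `i` entries `↘`. -/
def pathSet (n i : ℕ) : Set (Fin n → Bool) :=
  {lam | (Finset.univ.filter fun k => lam k = true).card = i}

/-- The height of the lattice path of `λ` at horizontal coordinate `j`
(the path starts at `(0,i)`; `↘` is a down-step, `↗` an up-step). -/
def hgt {n : ℕ} (i : ℕ) (lam : Fin n → Bool) (j : ℕ) : ℤ :=
  (i : ℤ) + ∑ k ∈ Finset.univ.filter (fun k : Fin n => (k : ℕ) < j),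
      (if lam k then (-1 : ℤ) else 1)

/-- `λ ≤ μ`: the path `λ` lies weakly below the path `μ`. -/
def pathLE {n : ℕ} (i : ℕ) (lam mu : Fin n → Bool) : Prop :=
  ∀ j ≤ n, hgt i lam j ≤ hgt i mu j

/-- Bruhat order on `S_n`: generated by `a < t·a` for transpositions `t`
with strictly increasing length. -/
def bruhatLE {n : ℕ} (u v : Equiv.Perm (Fin n)) : Prop :=
  Relation.ReflTransGen
    (fun a b => (∃ x y : Fin n, x ≠ y ∧ b = Equiv.swap x y * a) ∧ invLen a < invLen b) u v

/-- A Dyck strip of height `h`: the set of boxes (recorded by their centers) centered at the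
integral points of a Dyck path from `(x₀,h)` to `(x₀+2l,h)` staying weakly below height `h`. -/
def IsDyckStrip (D : Finset (ℤ × ℤ)) (h : ℤ) : Prop :=
  ∃ (x₀ : ℤ) (l : ℕ) (d : ℕ → ℤ),
    d 0 = 0 ∧ d (2 * l) = 0 ∧
    (∀ k < 2 * l, d (k + 1) = d k + 1 ∨ d (k + 1) = d k - 1) ∧
    (∀ k ≤ 2 * l, d k ≤ 0) ∧
    D = (Finset.range (2 * l + 1)).image fun k : ℕ => (x₀ + (k : ℤ), h + d k)

/-- The region `A(λ,μ)` between two paths `λ ≤ μ`, as the set of centers of the boxes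
lying strictly between the two lattice paths. -/
def region {n : ℕ} (i : ℕ) (lam mu : Fin n → Bool) : Set (ℤ × ℤ) :=
  {b | 0 ≤ b.1 ∧ b.1 ≤ (n : ℤ) ∧ Odd (b.1 + b.2 + (i : ℤ)) ∧
    hgt i lam b.1.toNat < b.2 ∧ b.2 < hgt i mu b.1.toNat}

/-- A Dyck partition of a region `A`: a partition of the boxes of `A` into Dyck strips. -/
def IsDyckPartition (P : Finset (Finset (ℤ × ℤ))) (A : Set (ℤ × ℤ)) : Prop :=
  (∀ D ∈ P, ∃ h, IsDyckStrip D h) ∧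
  (∀ D ∈ P, ∀ D' ∈ P, D ≠ D' → Disjoint D D') ∧
  (⋃ D ∈ P, (D : Set (ℤ × ℤ))) = A

/-- Type 1 condition: if some strip `D'` contains a box just above a box of `D`, then every box
just above a box of `D` is in `D'`. -/
def IsType1 (P : Finset (Finset (ℤ × ℤ))) : Prop :=
  ∀ D ∈ P, ∀ D' ∈ P, D ≠ D' → (∃ b ∈ D, (b.1, b.2 + 2) ∈ D') →
    ∀ b ∈ D, (b.1, b.2 + 2) ∈ D'

/-- The boxes just below, SW and SE of a box `b`. -/
def belowBoxes (b : ℤ × ℤ) : Finset (ℤ × ℤ) :=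
  {(b.1, b.2 - 2), (b.1 - 1, b.2 - 1), (b.1 + 1, b.2 - 1)}

/-- Type 2 condition: if some strip `D'` contains a box just below, SW or SE of a box of `D`,
then every box just below, SW or SE of a box of `D` belongs to `D` or `D'`. -/
def IsType2 (P : Finset (Finset (ℤ × ℤ))) : Prop :=
  ∀ D ∈ P, ∀ D' ∈ P, D ≠ D' → (∃ b ∈ D, ∃ c ∈ belowBoxes b, c ∈ D') →
    ∀ b ∈ D, ∀ c ∈ belowBoxes b, c ∈ D ∨ c ∈ D'

/-- `Conf¹(λ,μ)`: the set of type-1 Dyck partitions of the region `A(λ,μ)`. -/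
def Conf1 {n : ℕ} (i : ℕ) (lam mu : Fin n → Bool) : Set (Finset (Finset (ℤ × ℤ))) :=
  {P | IsDyckPartition P (region i lam mu) ∧ IsType1 P}

/-- `Conf²(λ,μ)`: the set of type-2 Dyck partitions of the region `A(λ,μ)`. -/
def Conf2 {n : ℕ} (i : ℕ) (lam mu : Fin n → Bool) : Set (Finset (Finset (ℤ × ℤ))) :=
  {P | IsDyckPartition P (region i lam mu) ∧ IsType2 P}

/-- The height of a Dyck strip (the largest `y`-coordinate of one of its boxes). -/
def stripHeight (D : Finset (ℤ × ℤ)) : ℤ := WithBot.unbotD 0 ((D.image Prod.snd).max)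

/-- Two Dyck strips are distant if no box of one is just above or just below a box of the other. -/
def Distant (D C : Finset (ℤ × ℤ)) : Prop :=
  ∀ b ∈ D, (b.1, b.2 + 2) ∉ C ∧ (b.1, b.2 - 2) ∉ C

/-- The order relation `P ≻ Q` on Dyck partitions. -/
def DPsucc (P Q : Finset (Finset (ℤ × ℤ))) : Prop :=
  ∃ h : ℤ, 0 < h ∧
    (∀ j : ℤ, h < j →
      P.filter (fun D => stripHeight D = j) = Q.filter (fun D => stripHeight D = j)) ∧
    P.filter (fun D => stripHeight D = h) ≠ Q.filter (fun D => stripHeight D = h) ∧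
    (∀ D ∈ P.filter (fun D => stripHeight D = h),
      ∃ D' ∈ Q.filter (fun D => stripHeight D = h), D ⊆ D')

/-!
Both sides only see where the down-steps of the paths are: for `j ≤ n`,
`hgt_j(λ) = i + j - 2·#{down-steps of λ before j}`, and `λ^w` has its down-steps at `w {0,…,i-1}`.

A Bruhat step `a < (x y)·a` with `x < y` cannot move a down-step from `y` to the earlier
position `x`, since that would shorten `a`; so it either fixes the path or moves a down-step
later, which raises the path. Hence `v ≤ w` forces `λ^v` below `λ^w`.

Conversely, if `λ^w` is somewhere strictly above `λ^v`, then `λ^w` has a peak (`↗` at `y-1`,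
`↘` at `y`) strictly above `λ^v`. Swapping the adjacent values `y-1, y` of `w` lowers that
peak by two, keeps `w` in `W^I`, shortens `w`, and keeps `λ^w` weakly above `λ^v`, so induction on
the length applies. When the paths agree, `v = w`: an element of `W^I` is increasing on both
blocks `{0,…,i-1}` and `{i,…,n-1}`, hence determined by the image of the first block.
-/

open Equiv Finset

theorem swap_lt_swap_of_covBy {α : Type*} [LinearOrder α] {x y a b : α} (hxy : x ⋖ y)
    (hab : a < b) (hne : ¬(a = x ∧ b = y)) : swap x y a < swap x y b := by
  have := hxy.lt
  have hlo : a < y → a ≤ x := hxy.le_of_lt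
  have hhi : x < b → y ≤ b := hxy.ge_of_gt
  rw [swap_apply_def, swap_apply_def]
  split_ifs <;> grind

theorem Equiv.comp_swap_eq_self {α β : Type*} [DecidableEq α] {f : α → β} {x y : α}
    (h : f x = f y) : f ∘ swap x y = f := by
  funext k
  rw [Function.comp_apply, swap_apply_def]
  split_ifs <;> simp_all

theorem StrictMonoOn.eqOn_of_image_eq {α β : Type*} [LinearOrder α] [WellFoundedLT α]
    [Preorder β] {f g : α → β} {s : Set α} (hf : StrictMonoOn f s) (hg : StrictMonoOn g s)
    (h : f '' s = g '' s) : s.EqOn f g := by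
  have := (hf.domRestrict.range_inj hg.domRestrict).1 (by simpa [Set.range_domRestrict] using h)
  exact fun a ha => congrFun this ⟨a, ha⟩

theorem strictMonoOn_of_covBy {α β : Type*} [LinearOrder α] [SuccOrder α] [IsSuccArchimedean α]
    [Preorder β] {f : α → β} {s : Set α} (hs : s.OrdConnected)
    (hf : ∀ a b, a ⋖ b → a ∈ s → b ∈ s → f a < f b) : StrictMonoOn f s :=
  strictMonoOn_of_lt_succ hs fun a ha has hsa => hf a _ (Order.covBy_succ_of_not_isMax ha) has hsa

namespace Equiv.Perm

variable {n : ℕ}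

def inversions (w : Perm (Fin n)) : Finset (Fin n × Fin n) :=
  {r | r.1 < r.2 ∧ w r.2 < w r.1}

theorem mem_inversions {w : Perm (Fin n)} {r : Fin n × Fin n} :
    r ∈ w.inversions ↔ r.1 < r.2 ∧ w r.2 < w r.1 := by
  simp [inversions]

theorem invLen_mul_swap_lt {a : Perm (Fin n)} {p q : Fin n} (hpq : p < q) (h : a q < a p) :
    invLen (a * swap p q) < invLen a := by
  -- `F` moves a pair reaching outside `[p, q]` by the transposition and fixes the pairs inside;
  -- it injects the inversions of `a * swap p q` into those of `a` other than `(p, q)`.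
  set F : Fin n × Fin n → Fin n × Fin n :=
    fun r => if r.1 < p ∨ q < r.2 then (swap p q r.1, swap p q r.2) else r with hF
  have hFF : ∀ r : Fin n × Fin n, r.1 < r.2 → F (F r) = r := by
    rintro ⟨r₁, r₂⟩ hr
    by_cases hout : r₁ < p ∨ q < r₂
    · have hout' : swap p q r₁ < p ∨ q < swap p q r₂ := by
        rcases hout with h₁ | h₂
        · exact .inl (by rwa [swap_apply_of_ne_of_ne h₁.ne (h₁.trans hpq).ne])
        · exact .inr (by rwa [swap_apply_of_ne_of_ne (hpq.trans h₂).ne' h₂.ne'])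
      simp [hF, hout, hout']
    · simp [hF, hout]
  have hmaps : ∀ r ∈ (a * swap p q).inversions, F r ∈ a.inversions.erase (p, q) := by
    rintro ⟨r₁, r₂⟩ hr
    rw [mem_inversions, Perm.mul_apply, Perm.mul_apply] at hr
    rw [mem_erase, mem_inversions]
    by_cases hout : r₁ < p ∨ q < r₂
    · simp only [hF, hout, if_true]
      refine ⟨?_, ?_, hr.2⟩ <;> rw [swap_apply_def, swap_apply_def] <;> split_ifs <;> grind
    · simp only [hF, hout, if_false]
      rw [swap_apply_def, swap_apply_def] at hr
      split_ifs at hr <;> grind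
  have hinj : Set.InjOn F (a * swap p q).inversions := by
    intro r hr s hs hrs
    rw [mem_coe, mem_inversions] at hr hs
    rw [← hFF r hr.1, hrs, hFF s hs.1]
  calc invLen (a * swap p q) ≤ #(a.inversions.erase (p, q)) := card_le_card_of_injOn F hmaps hinj
    _ < invLen a := card_erase_lt_of_mem (mem_inversions.2 ⟨hpq, h⟩)

theorem invLen_swap_mul_lt {w : Perm (Fin n)} {x y : Fin n} (hxy : x < y) (h : w⁻¹ y < w⁻¹ x) :
    invLen (swap x y * w) < invLen w := by
  rw [swap_mul_eq_mul_swap, swap_comm]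
  exact invLen_mul_swap_lt h (by simpa using hxy)

theorem invLen_lt_invLen_mul_swap_iff {w : Perm (Fin n)} {p q : Fin n} (hpq : p < q) :
    invLen w < invLen (w * swap p q) ↔ w p < w q := by
  refine ⟨fun hlt => ?_, fun hlt => ?_⟩
  · refine lt_of_le_of_ne (not_lt.1 fun hgt => ?_) (w.injective.ne hpq.ne)
    exact (invLen_mul_swap_lt hpq hgt).not_gt hlt
  · simpa [mul_assoc] using invLen_mul_swap_lt (a := w * swap p q) hpq (by simpa using hlt)

end Equiv.Perm

section MinimalRepresentatives

variable {n i : ℕ}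

theorem sT_eq_swap {a b : Fin n} (hab : a ⋖ b) : sT n a = swap a b := by
  have hb : (a : ℕ) + 1 = b := by simpa using hab
  rw [sT, dif_pos (hb ▸ b.2)]
  congr

theorem mem_minRep_iff {w : Perm (Fin n)} :
    w ∈ minRep n i ↔ ∀ a b : Fin n, a ⋖ b → (b : ℕ) ≠ i → w a < w b := by
  refine ⟨fun hw a b hab hb => ?_, fun hw m hm hmi => ?_⟩
  · have hb' : (a : ℕ) + 1 = b := by simpa using hab
    have := hw a (hb' ▸ b.2) (hb' ▸ hb)
    rwa [sT_eq_swap hab, Perm.invLen_lt_invLen_mul_swap_iff hab.lt] at this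
  · have hab : (⟨m, by omega⟩ : Fin n) ⋖ ⟨m + 1, hm⟩ := by simp
    rw [sT_eq_swap hab, Perm.invLen_lt_invLen_mul_swap_iff hab.lt]
    exact hw _ _ hab hmi

theorem toPath_eq_true_iff {w : Perm (Fin n)} {k : Fin n} :
    toPath i w k = true ↔ ((w⁻¹ k : Fin n) : ℕ) < i := by
  simp [toPath]

theorem toPath_eq_false_iff {w : Perm (Fin n)} {k : Fin n} :
    toPath i w k = false ↔ i ≤ ((w⁻¹ k : Fin n) : ℕ) := by
  simp [toPath]

theorem image_setOf_val_lt (w : Perm (Fin n)) :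
    w '' {a | (a : ℕ) < i} = {k | toPath i w k = true} := by
  ext k
  simp [Equiv.image_eq_preimage_symm, toPath_eq_true_iff, Perm.inv_def]

theorem strictMonoOn_val_lt_of_mem_minRep {w : Perm (Fin n)} (hw : w ∈ minRep n i) :
    StrictMonoOn w {a | (a : ℕ) < i} := by
  refine strictMonoOn_of_covBy ⟨fun a _ b hb c hc => ?_⟩ fun a b hab _ hb =>
    mem_minRep_iff.1 hw a b hab hb.ne
  simp only [Set.mem_ofPred_eq, Set.mem_Icc, Fin.le_def] at hb hc ⊢
  omega

theorem strictMonoOn_val_lt_compl_of_mem_minRep {w : Perm (Fin n)} (hw : w ∈ minRep n i) :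
    StrictMonoOn w {a | (a : ℕ) < i}ᶜ := by
  refine strictMonoOn_of_covBy ⟨fun a ha b _ c hc => ?_⟩ fun a b hab ha _ =>
    mem_minRep_iff.1 hw a b hab ?_
  · simp only [Set.mem_compl_iff, Set.mem_ofPred_eq, Set.mem_Icc, Fin.le_def] at ha hc ⊢
    omega
  · have : (a : ℕ) + 1 = b := by simpa using hab
    simp only [Set.mem_compl_iff, Set.mem_ofPred_eq] at ha
    omega

theorem eq_of_toPath_eq {v w : Perm (Fin n)} (hv : v ∈ minRep n i) (hw : w ∈ minRep n i)
    (h : toPath i v = toPath i w) : v = w := by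
  have hlow : v '' {a | (a : ℕ) < i} = w '' {a | (a : ℕ) < i} := by
    rw [image_setOf_val_lt, image_setOf_val_lt, h]
  have hhigh : v '' {a | (a : ℕ) < i}ᶜ = w '' {a | (a : ℕ) < i}ᶜ := by
    rw [Set.image_compl_eq v.bijective, Set.image_compl_eq w.bijective, hlow]
  ext a : 1
  by_cases ha : (a : ℕ) < i
  · exact (strictMonoOn_val_lt_of_mem_minRep hv).eqOn_of_image_eq
      (strictMonoOn_val_lt_of_mem_minRep hw) hlow ha
  · exact (strictMonoOn_val_lt_compl_of_mem_minRep hv).eqOn_of_image_eq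
      (strictMonoOn_val_lt_compl_of_mem_minRep hw) hhigh ha

theorem swap_mul_mem_minRep {w : Perm (Fin n)} (hw : w ∈ minRep n i) {x y : Fin n}
    (hxy : x ⋖ y) (hx : toPath i w x = false) (hy : toPath i w y = true) :
    swap x y * w ∈ minRep n i := by
  refine mem_minRep_iff.2 fun a b hab hb => swap_lt_swap_of_covBy hxy
    (mem_minRep_iff.1 hw a b hab hb) ?_
  rintro ⟨rfl, rfl⟩
  rw [toPath_eq_false_iff, Perm.inv_def, symm_apply_apply] at hx
  rw [toPath_eq_true_iff, Perm.inv_def, symm_apply_apply] at hy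
  exact (hy.trans_le hx).not_gt (Fin.lt_def.1 hab.lt)

end MinimalRepresentatives

section Paths

variable {n : ℕ}

def downCount (lam : Fin n → Bool) (j : ℕ) : ℕ :=
  #{k : Fin n | (k : ℕ) < j ∧ lam k = true}

theorem downCount_zero (lam : Fin n → Bool) : downCount lam 0 = 0 := by
  simp [downCount]

theorem downCount_succ (lam : Fin n → Bool) (k : Fin n) :
    downCount lam (k + 1) = downCount lam k + (lam k).toNat := by
  cases hk : lam k
  · simp only [downCount, Bool.toNat_false, add_zero]
    congr 1
    ext k'
    simp only [mem_filter, mem_univ, true_and]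
    grind
  · have : univ.filter (fun k' : Fin n => (k' : ℕ) < k + 1 ∧ lam k' = true) =
        insert k (univ.filter fun k' : Fin n => (k' : ℕ) < k ∧ lam k' = true) := by
      ext k'
      simp only [mem_filter, mem_univ, true_and, mem_insert]
      grind
    rw [downCount, downCount, this, card_insert_of_notMem (by simp), Bool.toNat_true]

theorem downCount_eq_card_filter (lam : Fin n → Bool) :
    downCount lam n = #{k | lam k = true} := by
  simp [downCount]

theorem hgt_eq (i : ℕ) (lam : Fin n → Bool) {j : ℕ} (hj : j ≤ n) :
    hgt i lam j = i + j - 2 * downCount lam j := by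
  have hcard : #{k : Fin n | (k : ℕ) < j} = j := by rw [Fin.card_filter_val_lt]; omega
  have hsplit := card_filter_add_card_filter_not (s := {k : Fin n | (k : ℕ) < j})
    (fun k => lam k = true)
  rw [hgt, downCount, ← filter_filter, sum_ite, sum_const, sum_const]
  simp only [hcard, nsmul_eq_mul, mul_neg, mul_one] at hsplit ⊢
  omega

theorem pathLE_iff_downCount_le (i : ℕ) (lam mu : Fin n → Bool) :
    pathLE i lam mu ↔ ∀ j ≤ n, downCount mu j ≤ downCount lam j := by
  refine forall₂_congr fun j hj => ?_
  rw [hgt_eq i lam hj, hgt_eq i mu hj]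
  omega

theorem eq_of_downCount_eq {lam mu : Fin n → Bool}
    (h : ∀ j ≤ n, downCount lam j = downCount mu j) : lam = mu := by
  funext k
  have hsucc := h (k + 1) k.2
  rw [downCount_succ, downCount_succ, h k k.2.le] at hsucc
  cases hl : lam k <;> cases hm : mu k <;> simp_all

theorem downCount_eq_comp_swap_add {lam : Fin n → Bool} {x y : Fin n} (hxy : x < y)
    (hx : lam x = true) (hy : lam y = false) {j : ℕ} (hj : j ≤ n) :
    downCount lam j = downCount (lam ∘ swap x y) j + if (x : ℕ) < j ∧ j ≤ y then 1 else 0 := by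
  induction j with
  | zero => simp [downCount_zero]
  | succ j ih =>
    have h₁ := downCount_succ lam ⟨j, hj⟩
    have h₂ := downCount_succ (lam ∘ swap x y) ⟨j, hj⟩
    simp only [Function.comp_apply] at h₁ h₂
    rw [h₁, h₂, ih (by omega)]
    rw [Fin.lt_def] at hxy
    rcases eq_or_ne ⟨j, hj⟩ x with rfl | hjx
    · simp only [swap_apply_left, hx, hy]
      split_ifs <;> simp_all
    rcases eq_or_ne ⟨j, hj⟩ y with rfl | hjy
    · simp only [swap_apply_right, hx, hy]
      split_ifs <;> simp_all
    · rw [swap_apply_of_ne_of_ne hjx hjy]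
      have : j ≠ x := fun h => hjx (Fin.ext h)
      have : j ≠ y := fun h => hjy (Fin.ext h)
      split_ifs <;> omega

theorem downCount_comp_swap_le {lam : Fin n → Bool} {x y : Fin n} (hxy : x < y)
    (h : lam y = true → lam x = true) {j : ℕ} (hj : j ≤ n) :
    downCount (lam ∘ swap x y) j ≤ downCount lam j := by
  cases hx : lam x <;> cases hy : lam y
  · rw [Equiv.comp_swap_eq_self (hx.trans hy.symm)]
  · simp_all
  · rw [downCount_eq_comp_swap_add hxy hx hy hj]
    omega
  · rw [Equiv.comp_swap_eq_self (hx.trans hy.symm)]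

theorem exists_down_of_gap {lam mu : Fin n → Bool} (hend : downCount lam n = downCount mu n)
    {j : ℕ} (hj : j ≤ n) (hgap : downCount lam j < downCount mu j) :
    ∃ y : Fin n, lam y = true ∧ downCount lam y < downCount mu y := by
  obtain ⟨d, hd⟩ : ∃ d, n = j + d := ⟨n - j, by omega⟩
  induction d generalizing j with
  | zero => simp_all
  | succ d ih =>
    obtain ⟨k, hkj⟩ : ∃ k : Fin n, (k : ℕ) = j := ⟨⟨j, by omega⟩, rfl⟩
    cases hk : lam k
    · have hlam := downCount_succ lam k
      have hmu := downCount_succ mu k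
      rw [hk, Bool.toNat_false, hkj] at hlam
      rw [hkj] at hmu
      exact ih (j := j + 1) (by omega) (by omega) (by omega)
    · exact ⟨k, hk, hkj ▸ hgap⟩

theorem exists_peak_of_gap_at_down {lam mu : Fin n → Bool} {y : Fin n} (hy : lam y = true)
    (hgap : downCount lam y < downCount mu y) :
    ∃ x z : Fin n, x ⋖ z ∧ lam x = false ∧ lam z = true ∧ downCount lam z < downCount mu z := by
  obtain ⟨k, hk⟩ : ∃ k, (y : ℕ) = k := ⟨_, rfl⟩
  induction k generalizing y with
  | zero => simp [hk, downCount_zero] at hgap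
  | succ k ih =>
    obtain ⟨x, hxk⟩ : ∃ x : Fin n, (x : ℕ) = k := ⟨⟨k, by omega⟩, rfl⟩
    have hxy : x ⋖ y := by simp [hxk, hk]
    cases hx : lam x
    · exact ⟨x, y, hxy, hx, hy, hgap⟩
    · have hxy' : (x : ℕ) + 1 = y := by omega
      have hlam := downCount_succ lam x
      have hmu := downCount_succ mu x
      rw [hx, Bool.toNat_true, hxy'] at hlam
      rw [hxy'] at hmu
      have := Bool.toNat_le (mu x)
      exact ih hx (by omega) hxk

theorem exists_peak_of_gap {lam mu : Fin n → Bool} (hend : downCount lam n = downCount mu n)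
    {j : ℕ} (hj : j ≤ n) (hgap : downCount lam j < downCount mu j) :
    ∃ x y : Fin n, x ⋖ y ∧ lam x = false ∧ lam y = true ∧ downCount lam y < downCount mu y :=
  have ⟨_, hy, hgap'⟩ := exists_down_of_gap hend hj hgap
  exists_peak_of_gap_at_down hy hgap'

end Paths

section PathsOfPermutations

variable {n i : ℕ}

theorem toPath_swap_mul (w : Perm (Fin n)) (x y : Fin n) :
    toPath i (swap x y * w) = toPath i w ∘ swap x y := by
  funext k
  simp [toPath, mul_inv_rev]

theorem toPath_mem_pathSet (hi : i ≤ n) (w : Perm (Fin n)) : toPath i w ∈ pathSet n i := by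
  have : #{k : Fin n | toPath i w k = true} = #{k : Fin n | (k : ℕ) < i} :=
    card_equiv w⁻¹ fun k => by simp [toPath_eq_true_iff]
  rw [pathSet, Set.mem_ofPred_eq, this, Fin.card_filter_val_lt]
  omega

theorem downCount_toPath_length (hi : i ≤ n) (w : Perm (Fin n)) :
    downCount (toPath i w) n = i :=
  (downCount_eq_card_filter _).trans (toPath_mem_pathSet hi w)

theorem downCount_toPath_le_of_step {a c : Perm (Fin n)}
    (hstep : (∃ x y : Fin n, x ≠ y ∧ c = swap x y * a) ∧ invLen a < invLen c) {j : ℕ}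
    (hj : j ≤ n) : downCount (toPath i c) j ≤ downCount (toPath i a) j := by
  obtain ⟨⟨x, y, hne, rfl⟩, hlen⟩ := hstep
  wlog hxy : x < y generalizing x y
  · rw [swap_comm] at hlen ⊢
    exact this y x hne.symm hlen (hne.lt_or_gt.resolve_left hxy)
  have hpos : a⁻¹ x < a⁻¹ y :=
    lt_of_not_ge fun hge => (Perm.invLen_swap_mul_lt hxy
      (hge.lt_of_ne (a⁻¹.injective.ne hne.symm))).not_gt hlen
  rw [toPath_swap_mul]
  refine downCount_comp_swap_le hxy (fun hy => ?_) hj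
  rw [toPath_eq_true_iff] at hy ⊢
  exact lt_trans (Fin.lt_def.1 hpos) hy

theorem downCount_toPath_le_of_bruhatLE {v w : Perm (Fin n)} (h : bruhatLE v w) {j : ℕ}
    (hj : j ≤ n) : downCount (toPath i w) j ≤ downCount (toPath i v) j := by
  induction h with
  | refl => rfl
  | tail _ hstep ih => exact (downCount_toPath_le_of_step hstep hj).trans ih

theorem downCount_toPath_swap_mul {w : Perm (Fin n)} {x y : Fin n} (hxy : x ⋖ y)
    (hx : toPath i w x = false) (hy : toPath i w y = true) {j : ℕ} (hj : j ≤ n) :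
    downCount (toPath i (swap x y * w)) j = downCount (toPath i w) j + if j = y then 1 else 0 := by
  have hcomp : toPath i (swap x y * w) ∘ swap x y = toPath i w := by
    funext k
    simp [toPath_swap_mul]
  have hxy' : (x : ℕ) + 1 = y := by simpa using hxy
  rw [downCount_eq_comp_swap_add hxy.lt (by simpa [toPath_swap_mul]) (by simpa [toPath_swap_mul])
    hj, hcomp]
  congr 1
  split_ifs <;> omega

theorem bruhatLE_of_downCount_le (hi : i ≤ n) {v w : Perm (Fin n)} (hv : v ∈ minRep n i)
    (hw : w ∈ minRep n i) (h : ∀ j ≤ n, downCount (toPath i w) j ≤ downCount (toPath i v) j) :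
    bruhatLE v w := by
  induction hlen : invLen w using Nat.strong_induction_on generalizing w with
  | _ N ih =>
    by_cases hgap : ∃ j ≤ n, downCount (toPath i w) j < downCount (toPath i v) j
    · obtain ⟨j, hj, hgap⟩ := hgap
      have hend : downCount (toPath i w) n = downCount (toPath i v) n := by
        rw [downCount_toPath_length hi, downCount_toPath_length hi]
      obtain ⟨x, y, hxy, hx, hy, hgap⟩ := exists_peak_of_gap hend hj hgap
      have hlen' : invLen (swap x y * w) < invLen w := by
        rw [toPath_eq_true_iff] at hy
        rw [toPath_eq_false_iff] at hx
        exact Perm.invLen_swap_mul_lt hxy.lt (Fin.lt_def.2 (hy.trans_le hx))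
      have hle' : ∀ j ≤ n, downCount (toPath i (swap x y * w)) j ≤ downCount (toPath i v) j := by
        intro j hj
        rw [downCount_toPath_swap_mul hxy hx hy hj]
        split_ifs with hjy
        · subst hjy
          omega
        · simpa using h j hj
      exact .tail (ih _ (hlen ▸ hlen') (swap_mul_mem_minRep hw hxy hx hy) hle' rfl)
        ⟨⟨x, y, hxy.ne, (swap_mul_self_mul x y w).symm⟩, hlen'⟩
    · push Not at hgap
      have : toPath i v = toPath i w :=
        eq_of_downCount_eq fun j hj => (hgap j hj).antisymm (h j hj)
      rw [eq_of_toPath_eq hv hw this]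
      exact .refl

end PathsOfPermutations

theorem bruhat_iff_heights_general (n i : ℕ) (hi2 : i < n)
    (v w : Equiv.Perm (Fin n)) (hv : v ∈ minRep n i) (hw : w ∈ minRep n i) :
    bruhatLE v w ↔ ∀ j ≤ n, hgt i (toPath i v) j ≤ hgt i (toPath i w) j := by
  change bruhatLE v w ↔ pathLE i (toPath i v) (toPath i w)
  rw [pathLE_iff_downCount_le]
  exact ⟨fun h _ hj => downCount_toPath_le_of_bruhatLE h hj,
    bruhatLE_of_downCount_le hi2.le hv hw⟩

/-- Bruhat order on `W^I` is equivalent to comparison of path heights. -/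
theorem bruhat_iff_heights (n i : ℕ) (hi1 : 1 ≤ i) (hi2 : i < n)
    (v w : Equiv.Perm (Fin n)) (hv : v ∈ minRep n i) (hw : w ∈ minRep n i) :
    bruhatLE v w ↔ ∀ j ≤ n, hgt i (toPath i v) j ≤ hgt i (toPath i w) j :=
  bruhat_iff_heights_general n i hi2 v w hv hw

end
end

section
/- Let λ ≤ μ be paths in Λ_{n,i}. Then there exists at most one type-2 Dyck partition of the region A(λ,μ); i.e. the set Conf²(λ,μ) has cardinality 0 or 1. Consequently the inverse parabolic Kazhdan–Lusztig polynomial g^I_{λ,μ}(v) = Σ_{P∈Conf²(λ,μ)} v^{|P|} is either 0 or a monomial. -/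
open scoped Classical

noncomputable section

/-!
A lowest box `v` of the region pins the strip through it: in a type-2 partition that strip
contains every box of the region just below, SW or SE of one of its boxes, since otherwise type 2
would put the box just below `v` into the region. Two such strips through `v`, one from each
partition, agree column by column moving away from `v`: if the box diagonally below exists both
contain it, and if not, a box diagonally above lying in one strip but not the other would, by
type 2, force that missing box into the region. Removing the common strip and inducting on the
number of strips gives uniqueness, for an arbitrary region.
-/

def IsClosedBelow (D : Finset (ℤ × ℤ)) (A : Set (ℤ × ℤ)) : Prop :=
  ∀ b ∈ D, ∀ c ∈ belowBoxes b, c ∈ A → c ∈ D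

theorem Set.OrdConnected.subset_of_mem_of_step {C S : Set ℤ} (hC : C.OrdConnected) {v : ℤ}
    (hvC : v ∈ C) (hvS : v ∈ S)
    (hstep : ∀ a ∈ S, ∀ a' ∈ C, (a' = a + 1 ∨ a' = a - 1) → a' ∈ S) : C ⊆ S := by
  intro c hc
  rcases le_total v c with hvc | hcv
  · induction c, hvc using Int.leInduction with
    | base => exact hvS
    | succ c hvc ih => exact hstep c (ih (hC.out hvC hc ⟨hvc, by omega⟩)) _ hc (Or.inl rfl)
  · induction c, hcv using Int.leInductionDown with
    | base => exact hvS
    | pred c hcv ih => exact hstep c (ih (hC.out hc hvC ⟨by omega, hcv⟩)) _ hc (Or.inr rfl)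

namespace IsDyckStrip

variable {D : Finset (ℤ × ℤ)} {h : ℤ}

theorem nonempty (hD : IsDyckStrip D h) : D.Nonempty := by
  obtain ⟨x₀, l, d, -, -, -, -, rfl⟩ := hD
  exact Finset.image_nonempty.2 (Finset.nonempty_range_iff.2 (by omega))

theorem injOn_fst (hD : IsDyckStrip D h) : Set.InjOn Prod.fst (D : Set (ℤ × ℤ)) := by
  obtain ⟨x₀, l, d, -, -, -, -, rfl⟩ := hD
  rintro _ hp _ hq hpq
  simp only [Finset.coe_image, Set.mem_image, Finset.mem_coe] at hp hq
  obtain ⟨k, -, rfl⟩ := hp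
  obtain ⟨k', -, rfl⟩ := hq
  obtain rfl : k = k' := by simpa using hpq
  rfl

theorem ordConnected_image_fst (hD : IsDyckStrip D h) :
    (Prod.fst '' (D : Set (ℤ × ℤ))).OrdConnected := by
  obtain ⟨x₀, l, d, -, -, -, -, rfl⟩ := hD
  convert Set.ordConnected_Icc (a := x₀) (b := x₀ + 2 * l)
  ext c
  simp only [Finset.coe_image, Set.image_image, Set.mem_image, Finset.mem_coe,
    Finset.mem_range, Set.mem_Icc]
  constructor
  · rintro ⟨k, hk, rfl⟩
    omega
  · intro hc
    exact ⟨(c - x₀).toNat, by omega, by omega⟩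

theorem snd_eq_add_one_or_sub_one (hD : IsDyckStrip D h) {a a' y y' : ℤ} (hy : (a, y) ∈ D)
    (hy' : (a', y') ∈ D) (hadj : a' = a + 1 ∨ a' = a - 1) : y' = y + 1 ∨ y' = y - 1 := by
  obtain ⟨x₀, l, d, -, -, hstep, -, rfl⟩ := hD
  simp only [Finset.mem_image, Finset.mem_range, Prod.ext_iff] at hy hy'
  obtain ⟨k, hk, rfl, rfl⟩ := hy
  obtain ⟨k', hk', rfl, rfl⟩ := hy'
  rcases hadj with hadj | hadj
  · obtain rfl : k' = k + 1 := by omega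
    rcases hstep k (by omega) with h | h <;> omega
  · obtain rfl : k = k' + 1 := by omega
    rcases hstep k' (by omega) with h | h <;> omega

end IsDyckStrip

namespace IsDyckPartition

variable {P Q : Finset (Finset (ℤ × ℤ))} {A : Set (ℤ × ℤ)} {D : Finset (ℤ × ℤ)}

theorem subset (hP : IsDyckPartition P A) (hD : D ∈ P) : (D : Set (ℤ × ℤ)) ⊆ A :=
  hP.2.2 ▸ Set.subset_biUnion_of_mem (u := fun D : Finset (ℤ × ℤ) => (D : Set (ℤ × ℤ))) hD

theorem exists_mem (hP : IsDyckPartition P A) {c : ℤ × ℤ} (hc : c ∈ A) : ∃ D ∈ P, c ∈ D := by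
  simpa [← hP.2.2] using hc

theorem eq_empty (hP : IsDyckPartition P ∅) : P = ∅ := by
  refine Finset.eq_empty_of_forall_notMem fun D hD => ?_
  obtain ⟨h, hD'⟩ := hP.1 D hD
  obtain ⟨c, hc⟩ := hD'.nonempty
  exact hP.subset hD hc

theorem exists_forall_snd_le (hP : IsDyckPartition P A) (hne : P.Nonempty) :
    ∃ v ∈ A, ∀ c ∈ A, v.2 ≤ c.2 := by
  have hA : ((P.biUnion id : Finset (ℤ × ℤ)) : Set (ℤ × ℤ)) = A := by
    simp [← hP.2.2]
  obtain ⟨D, hD⟩ := hne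
  obtain ⟨h, hDs⟩ := hP.1 D hD
  obtain ⟨c, hc⟩ := hDs.nonempty
  obtain ⟨v, hv, hmin⟩ := (P.biUnion id).exists_min_image Prod.snd
    ⟨c, Finset.mem_biUnion.2 ⟨D, hD, hc⟩⟩
  rw [← Finset.mem_coe, hA] at hv
  exact ⟨v, hv, fun c hc => hmin c (by rwa [← Finset.mem_coe, hA])⟩

theorem erase (hP : IsDyckPartition P A) (hD : D ∈ P) :
    IsDyckPartition (P.erase D) (A \ D) := by
  refine ⟨fun C hC => hP.1 C (Finset.mem_of_mem_erase hC),
    fun C hC C' hC' => hP.2.1 C (Finset.mem_of_mem_erase hC) C' (Finset.mem_of_mem_erase hC'), ?_⟩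
  ext c
  simp only [Set.mem_iUnion, Set.mem_sdiff, Finset.mem_coe, Finset.mem_erase, exists_prop]
  constructor
  · rintro ⟨C, ⟨hCD, hC⟩, hcC⟩
    exact ⟨hP.subset hC hcC, Finset.disjoint_left.1 (hP.2.1 C hC D hD hCD) hcC⟩
  · rintro ⟨hcA, hcD⟩
    obtain ⟨C, hC, hcC⟩ := hP.exists_mem hcA
    exact ⟨C, ⟨fun h => hcD (h ▸ hcC), hC⟩, hcC⟩

end IsDyckPartition

namespace IsType2

variable {P Q : Finset (Finset (ℤ × ℤ))} {A : Set (ℤ × ℤ)} {D E : Finset (ℤ × ℤ)}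

theorem mono (hP : IsType2 P) (hQP : Q ⊆ P) : IsType2 Q :=
  fun D hD D' hD' => hP D (hQP hD) D' (hQP hD')

theorem isClosedBelow_of_forall_snd_le (hP2 : IsType2 P) (hP : IsDyckPartition P A)
    (hD : D ∈ P) {v : ℤ × ℤ} (hv : v ∈ D) (hmin : ∀ c ∈ A, v.2 ≤ c.2) : IsClosedBelow D A := by
  intro b hb c hc hcA
  by_contra hcD
  obtain ⟨D', hD', hcD'⟩ := hP.exists_mem hcA
  have hDD' : D ≠ D' := by rintro rfl; exact hcD hcD'
  have hbelow : (v.1, v.2 - 2) ∈ belowBoxes v := by simp [belowBoxes]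
  have hvA : (v.1, v.2 - 2) ∈ A := by
    rcases hP2 D hD D' hD' hDD' ⟨b, hb, c, hc, hcD'⟩ v hv _ hbelow with h | h
    exacts [hP.subset hD h, hP.subset hD' h]
  linarith [hmin _ hvA]

theorem exists_mem_mem_of_adj (hQ2 : IsType2 Q) (hQ : IsDyckPartition Q A) {h : ℤ}
    (hD : IsDyckStrip D h) (hDA : (D : Set (ℤ × ℤ)) ⊆ A) (hDc : IsClosedBelow D A)
    (hE : E ∈ Q) (hEc : IsClosedBelow E A) {a a' y b : ℤ} (hyD : (a, y) ∈ D) (hyE : (a, y) ∈ E)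
    (hbD : (a', b) ∈ D) (hadj : a' = a + 1 ∨ a' = a - 1) :
    ∃ y', (a', y') ∈ D ∧ (a', y') ∈ E := by
  by_cases hlow : (a', y - 1) ∈ A
  · have hbelow : (a', y - 1) ∈ belowBoxes (a, y) := by
      rcases hadj with rfl | rfl <;> simp [belowBoxes]
    exact ⟨y - 1, hDc _ hyD _ hbelow hlow, hEc _ hyE _ hbelow hlow⟩
  obtain rfl : b = y + 1 := by
    rcases hD.snd_eq_add_one_or_sub_one hyD hbD hadj with rfl | rfl
    · rfl
    · exact absurd (hDA hbD) hlow
  refine ⟨y + 1, hbD, ?_⟩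
  obtain ⟨C, hC, hbC⟩ := hQ.exists_mem (hDA hbD)
  by_cases hCE : C = E
  · exact hCE ▸ hbC
  have hyb : (a, y) ∈ belowBoxes (a', y + 1) := by
    rcases hadj with rfl | rfl <;> simp [belowBoxes]
  have hlowb : (a', y - 1) ∈ belowBoxes (a', y + 1) := by
    simp only [belowBoxes, Finset.mem_insert, Finset.mem_singleton, Prod.mk.injEq, true_and]
    exact Or.inl (by ring)
  rcases hQ2 C hC E hE hCE ⟨_, hbC, _, hyb, hyE⟩ _ hbC _ hlowb with h | h
  exacts [absurd (hQ.subset hC h) hlow, absurd (hQ.subset hE h) hlow]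

theorem subset_of_isClosedBelow (hQ2 : IsType2 Q) (hQ : IsDyckPartition Q A) {h : ℤ}
    (hD : IsDyckStrip D h) (hDA : (D : Set (ℤ × ℤ)) ⊆ A) (hDc : IsClosedBelow D A)
    (hE : E ∈ Q) (hEc : IsClosedBelow E A) {v : ℤ × ℤ} (hvD : v ∈ D) (hvE : v ∈ E) :
    D ⊆ E := by
  have hcols : Prod.fst '' (D : Set (ℤ × ℤ)) ⊆ {a | ∃ y, (a, y) ∈ D ∧ (a, y) ∈ E} := by
    refine hD.ordConnected_image_fst.subset_of_mem_of_step ⟨v, hvD, rfl⟩ ⟨v.2, hvD, hvE⟩ ?_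
    rintro a ⟨y, hyD, hyE⟩ a' ⟨⟨_, b⟩, hbD, rfl⟩ hadj
    exact hQ2.exists_mem_mem_of_adj hQ hD hDA hDc hE hEc hyD hyE hbD hadj
  intro p hp
  obtain ⟨y, hyD, hyE⟩ := hcols ⟨p, hp, rfl⟩
  rwa [hD.injOn_fst hp hyD rfl]

end IsType2

theorem IsDyckPartition.eq_of_isType2 {P Q : Finset (Finset (ℤ × ℤ))} {A : Set (ℤ × ℤ)}
    (hP : IsDyckPartition P A) (hP2 : IsType2 P) (hQ : IsDyckPartition Q A) (hQ2 : IsType2 Q) :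
    P = Q := by
  induction P using Finset.strongInduction generalizing Q A with
  | H P ih =>
  rcases P.eq_empty_or_nonempty with rfl | hPne
  · obtain rfl : A = ∅ := by simpa using hP.2.2.symm
    exact hQ.eq_empty.symm
  obtain ⟨v, hvA, hmin⟩ := hP.exists_forall_snd_le hPne
  obtain ⟨D, hD, hvD⟩ := hP.exists_mem hvA
  obtain ⟨E, hE, hvE⟩ := hQ.exists_mem hvA
  have hDc := hP2.isClosedBelow_of_forall_snd_le hP hD hvD hmin
  have hEc := hQ2.isClosedBelow_of_forall_snd_le hQ hE hvE hmin
  obtain ⟨h, hDs⟩ := hP.1 D hD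
  obtain ⟨h', hEs⟩ := hQ.1 E hE
  obtain rfl : D = E := subset_antisymm
    (hQ2.subset_of_isClosedBelow hQ hDs (hP.subset hD) hDc hE hEc hvD hvE)
    (hP2.subset_of_isClosedBelow hP hEs (hQ.subset hE) hEc hD hDc hvE hvD)
  have herase : P.erase D = Q.erase D :=
    ih _ (Finset.erase_ssubset hD) (hP.erase hD) (hP2.mono (P.erase_subset D)) (hQ.erase hE)
      (hQ2.mono (Q.erase_subset D))
  rw [← Finset.insert_erase hD, ← Finset.insert_erase hE, herase]

theorem conf2_subsingleton_general (n i : ℕ)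
    (lam mu : Fin n → Bool) :
    (Conf2 i lam mu).Subsingleton :=
  fun _ hP _ hQ => hP.1.eq_of_isType2 hP.2 hQ.1 hQ.2

/-- there is at most one type-2 Dyck partition of the region `A(λ,μ)`. -/
theorem conf2_subsingleton (n i : ℕ) (hi1 : 1 ≤ i) (hi2 : i < n)
    (lam mu : Fin n → Bool) (hlam : lam ∈ pathSet n i) (hmu : mu ∈ pathSet n i)
    (hle : pathLE i lam mu) :
    (Conf2 i lam mu).Subsingleton :=
  conf2_subsingleton_general n i lam mu
end
end

section
/- Let λ < μ be paths and {C, D} a type-2 Dyck partition of A(λ,μ) with some box of C lying just below a box of D and hgt(C) < hgt(D). Then {C, D} is the unique Dyck partition of A(λ,μ) with two strips, and in particular Conf¹(λ,μ) contains no Dyck partition with exactly two elements. -/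
open scoped Classical

noncomputable section

/-!
Type 2 puts every box of `D` directly above a box of `C`, and the box SW of the left end of `D`
into `C`; the latter box has no box of `D` above it, which breaks type 1. For uniqueness, let
`{E, F}` be any two-strip partition, say with the left end of `D` in `F`. A Dyck strip has one box
per column and moves by `±1` between adjacent columns, so the pattern "box of `D` in `F`, box of
`C` below it in `E`" propagates from column to column and `D ⊆ F`. The end boxes of `F` are then
at height at least `hgt(D) > hgt(C)`, so they are not in `C`; hence `F` spans no column outside
`D`, and `F = D`, `E = C`.
-/

namespace IsDyckStrip

variable {S : Finset (ℤ × ℤ)} {h : ℤ}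

theorem snd_le (hS : IsDyckStrip S h) {p : ℤ × ℤ} (hp : p ∈ S) : p.2 ≤ h := by
  obtain ⟨x₀, l, d, -, -, -, hle, rfl⟩ := hS
  obtain ⟨k, hk, rfl⟩ := Finset.mem_image.1 hp
  simpa using hle k (by simpa [Nat.lt_succ_iff] using hk)

theorem snd_eq_of_mem (hS : IsDyckStrip S h) {x y y' : ℤ} (hy : (x, y) ∈ S)
    (hy' : (x, y') ∈ S) : y = y' := by
  obtain ⟨x₀, l, d, -, -, -, -, rfl⟩ := hS
  obtain ⟨k, -, hk⟩ := Finset.mem_image.1 hy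
  obtain ⟨k', -, hk'⟩ := Finset.mem_image.1 hy'
  simp only [Prod.mk.injEq] at hk hk'
  obtain rfl : k = k' := by omega
  rw [← hk.2, ← hk'.2]

theorem snd_succ (hS : IsDyckStrip S h) {x y y' : ℤ} (hy : (x, y) ∈ S)
    (hy' : (x + 1, y') ∈ S) : y' = y + 1 ∨ y' = y - 1 := by
  obtain ⟨x₀, l, d, -, -, hstep, -, rfl⟩ := hS
  obtain ⟨k, -, hk⟩ := Finset.mem_image.1 hy
  obtain ⟨k', hk'l, hk'⟩ := Finset.mem_image.1 hy'
  simp only [Prod.mk.injEq, Finset.mem_range] at hk hk' hk'l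
  obtain rfl : k' = k + 1 := by omega
  rcases hstep k (by omega) with e | e <;> omega

theorem exists_ends (hS : IsDyckStrip S h) :
    ∃ a b : ℤ, (a, h) ∈ S ∧ (b, h) ∈ S ∧
      ∀ x, (∃ y, (x, y) ∈ S) ↔ a ≤ x ∧ x ≤ b := by
  obtain ⟨x₀, l, d, hd0, hdl, -, -, rfl⟩ := hS
  refine ⟨x₀, x₀ + 2 * l, Finset.mem_image.2 ⟨0, by simp, by simp [hd0]⟩,
    Finset.mem_image.2 ⟨2 * l, by simp, by simp [hdl]⟩, fun x => ⟨?_, fun hx => ?_⟩⟩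
  · rintro ⟨y, hy⟩
    obtain ⟨k, hk, hkx⟩ := Finset.mem_image.1 hy
    simp only [Prod.mk.injEq, Finset.mem_range] at hk hkx
    omega
  · refine ⟨h + d (x - x₀).toNat, Finset.mem_image.2 ⟨(x - x₀).toNat, ?_, ?_⟩⟩
    · simp only [Finset.mem_range]
      omega
    · simp only [Prod.mk.injEq, and_true]
      omega

end IsDyckStrip

theorem IsDyckPartition.pair {C D : Finset (ℤ × ℤ)} {A : Set (ℤ × ℤ)}
    (hP : IsDyckPartition {C, D} A) (hne : C ≠ D) :
    (∃ h, IsDyckStrip C h) ∧ (∃ h, IsDyckStrip D h) ∧ Disjoint C D ∧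
      ((C ∪ D : Finset (ℤ × ℤ)) : Set (ℤ × ℤ)) = A := by
  obtain ⟨hstrip, hdisj, hunion⟩ := hP
  refine ⟨hstrip C (by simp), hstrip D (by simp), hdisj C (by simp) D (by simp) hne, ?_⟩
  rw [← hunion]
  simp

section Stacking

variable {C D E F : Finset (ℤ × ℤ)} {hc hd he hf : ℤ}

theorem mem_succ_of_stacked (hE : IsDyckStrip E he) (hF : IsDyckStrip F hf) {x y y' : ℤ}
    (htop : (x, y) ∈ F) (hbot : (x, y - 2) ∈ E)
    (htop' : (x + 1, y') ∈ E ∪ F) (hbot' : (x + 1, y' - 2) ∈ E ∪ F) :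
    (x + 1, y') ∈ F ∧ (x + 1, y' - 2) ∈ E := by
  have htopF : (x + 1, y') ∈ F := by
    refine (Finset.mem_union.1 htop').resolve_left fun htopE => ?_
    have := hE.snd_succ hbot htopE
    rcases Finset.mem_union.1 hbot' with hbotE | hbotF
    · have := hE.snd_eq_of_mem htopE hbotE
      omega
    · have := hF.snd_succ htop hbotF
      omega
  refine ⟨htopF, (Finset.mem_union.1 hbot').resolve_right fun hbotF => ?_⟩
  have := hF.snd_eq_of_mem htopF hbotF
  omega

theorem stacked_of_left_mem (hD : IsDyckStrip D hd) (hE : IsDyckStrip E he)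
    (hF : IsDyckStrip F hf) {a b : ℤ} (haD : (a, hd) ∈ D)
    (hcols : ∀ x, (∃ y, (x, y) ∈ D) ↔ a ≤ x ∧ x ≤ b)
    (hcover : ∀ p ∈ D, p ∈ E ∪ F ∧ (p.1, p.2 - 2) ∈ E ∪ F) (haF : (a, hd) ∈ F) :
    ∀ p ∈ D, p ∈ F ∧ (p.1, p.2 - 2) ∈ E := by
  suffices key : ∀ x, a ≤ x → ∀ y, (x, y) ∈ D → (x, y) ∈ F ∧ (x, y - 2) ∈ E from
    fun p hp => key p.1 ((hcols p.1).1 ⟨p.2, hp⟩).1 p.2 hp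
  intro x hx
  induction x, hx using Int.leInduction with
  | base =>
    intro y hy
    obtain rfl := hD.snd_eq_of_mem haD hy
    refine ⟨haF, (Finset.mem_union.1 (hcover _ haD).2).resolve_right fun hbotF => ?_⟩
    have := hF.snd_eq_of_mem haF hbotF
    omega
  | succ x hx ih =>
    intro y' hy'
    obtain ⟨y, hy⟩ := (hcols x).2 ⟨hx, by linarith [((hcols (x + 1)).1 ⟨y', hy'⟩).2]⟩
    obtain ⟨htop, hbot⟩ := ih y hy
    exact mem_succ_of_stacked hE hF htop hbot (hcover _ hy').1 (hcover _ hy').2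

theorem eq_of_union_eq (hC : IsDyckStrip C hc) (hD : IsDyckStrip D hd) (hlt : hc < hd)
    (hCD : Disjoint C D) (hbelow : ∀ p ∈ D, (p.1, p.2 - 2) ∈ C)
    (hE : IsDyckStrip E he) (hF : IsDyckStrip F hf) (hEF : Disjoint E F)
    (hU : E ∪ F = C ∪ D) {a b : ℤ} (haD : (a, hd) ∈ D)
    (hcols : ∀ x, (∃ y, (x, y) ∈ D) ↔ a ≤ x ∧ x ≤ b) (haF : (a, hd) ∈ F) :
    F = D ∧ E = C := by
  have hstack := stacked_of_left_mem hD hE hF haD hcols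
    (fun p hp => ⟨hU ▸ Finset.mem_union_right C hp,
      hU ▸ Finset.mem_union_left D (hbelow p hp)⟩) haF
  have hhf : hd ≤ hf := hF.snd_le haF
  have hends : ∀ x, (x, hf) ∈ F → a ≤ x ∧ x ≤ b := by
    intro x hx
    rcases Finset.mem_union.1 (hU ▸ Finset.mem_union_right E hx) with hxC | hxD
    · have := hC.snd_le hxC
      omega
    · exact (hcols x).1 ⟨hf, hxD⟩
  obtain ⟨a', b', ha'F, hb'F, hcolsF⟩ := hF.exists_ends
  have hFD : F ⊆ D := by
    rintro ⟨x, y⟩ hp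
    have hx := (hcolsF x).1 ⟨y, hp⟩
    obtain ⟨y', hy'⟩ := (hcols x).2
      ⟨(hends a' ha'F).1.trans hx.1, hx.2.trans (hends b' hb'F).2⟩
    obtain rfl := hF.snd_eq_of_mem hp (hstack _ hy').1
    exact hy'
  have hFeq : F = D := hFD.antisymm fun p hp => (hstack p hp).1
  refine ⟨hFeq, ?_⟩
  rw [← Finset.sdiff_eq_self_of_disjoint hEF, ← Finset.union_sdiff_right, hU, hFeq,
    Finset.union_sdiff_right, Finset.sdiff_eq_self_of_disjoint hCD]

end Stacking

theorem overlying_low_unique_general (n i : ℕ)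
    (lam mu : Fin n → Bool)
    (C D : Finset (ℤ × ℤ)) (hc hd : ℤ)
    (hCs : IsDyckStrip C hc) (hDs : IsDyckStrip D hd) (hlt : hc < hd) (hne : C ≠ D)
    (hpart : IsDyckPartition {C, D} (region i lam mu))
    (htype2 : IsType2 {C, D})
    (hbelow : ∃ b ∈ D, (b.1, b.2 - 2) ∈ C) :
    (∀ P, IsDyckPartition P (region i lam mu) → P.card = 2 → P = {C, D}) ∧
    (∀ P, IsDyckPartition P (region i lam mu) → P.card = 2 → ¬ IsType1 P) := by
  obtain ⟨-, -, hCD, hCDA⟩ := hpart.pair hne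
  have hbelowD : ∀ p ∈ D, ∀ c ∈ belowBoxes p, c ∈ D ∨ c ∈ C := by
    obtain ⟨p, hp, hpC⟩ := hbelow
    exact htype2 D (by simp) C (by simp) hne.symm ⟨p, hp, _, by simp [belowBoxes], hpC⟩
  have hbelowC : ∀ p ∈ D, (p.1, p.2 - 2) ∈ C := fun p hp =>
    (hbelowD p hp _ (by simp [belowBoxes])).resolve_left fun h => by
      have := hDs.snd_eq_of_mem hp h
      omega
  obtain ⟨a, b, haD, -, hcols⟩ := hDs.exists_ends
  have hunique : ∀ P, IsDyckPartition P (region i lam mu) → P.card = 2 → P = {C, D} := by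
    intro P hP hcard
    obtain ⟨E, F, hEF, rfl⟩ := Finset.card_eq_two.1 hcard
    obtain ⟨⟨_, hE⟩, ⟨_, hF⟩, hEFd, hEFA⟩ := hP.pair hEF
    have hU : E ∪ F = C ∪ D := Finset.coe_injective (hEFA.trans hCDA.symm)
    rcases Finset.mem_union.1 (hU ▸ Finset.mem_union_right C haD) with haE | haF
    · obtain ⟨rfl, rfl⟩ := eq_of_union_eq hCs hDs hlt hCD hbelowC hF hE hEFd.symm
        (by rw [Finset.union_comm, hU]) haD hcols haE
      exact Finset.pair_comm _ _
    · obtain ⟨rfl, rfl⟩ := eq_of_union_eq hCs hDs hlt hCD hbelowC hE hF hEFd hU haD hcols haF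
      rfl
  refine ⟨hunique, fun P hP hcard htype1 => ?_⟩
  rw [hunique P hP hcard] at htype1
  have hSW : (a - 1, hd - 1) ∈ C :=
    (hbelowD _ haD _ (by simp [belowBoxes])).resolve_left fun h => by
      have := (hcols _).1 ⟨_, h⟩
      omega
  obtain ⟨p, hp, hpC⟩ := hbelow
  have hNW := htype1 C (by simp) D (by simp) hne ⟨_, hpC, by simpa using hp⟩ _ hSW
  have := (hcols _).1 ⟨_, hNW⟩
  omega

/-- for a type-2 partition `{C,D}` with a box of `C` just below a box of `D`
and `hgt(C) < hgt(D)`, `{C,D}` is the unique two-strip Dyck partition of the region, and no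
type-1 Dyck partition of the region has exactly two strips. -/
theorem overlying_low_unique (n i : ℕ) (hi1 : 1 ≤ i) (hi2 : i < n)
    (lam mu : Fin n → Bool) (hlam : lam ∈ pathSet n i) (hmu : mu ∈ pathSet n i)
    (hle : pathLE i lam mu)
    (C D : Finset (ℤ × ℤ)) (hc hd : ℤ)
    (hCs : IsDyckStrip C hc) (hDs : IsDyckStrip D hd) (hlt : hc < hd) (hne : C ≠ D)
    (hpart : IsDyckPartition {C, D} (region i lam mu))
    (htype2 : IsType2 {C, D})
    (hbelow : ∃ b ∈ D, (b.1, b.2 - 2) ∈ C) :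
    (∀ P, IsDyckPartition P (region i lam mu) → P.card = 2 → P = {C, D}) ∧
    (∀ P, IsDyckPartition P (region i lam mu) → P.card = 2 → ¬ IsType1 P) :=
  overlying_low_unique_general n i lam mu C D hc hd hCs hDs hlt hne hpart htype2 hbelow
end
end

section
/- Let E be a bounded complex in an additive category, E₁ a subcomplex of E, and suppose E₁ = E₂ ⊕ T as complexes with T contractible of the form [B →~ B] concentrated in two adjacent degrees (the differential an isomorphism). Then there exists a decomposition E = Ẽ ⊕ T' with T' ≅ T such that E₂ is a subcomplex of Ẽ. -/
/-!
Choose a complement `W` of `T (n₀ + 1)` in `Mod (n₀ + 1)` containing `S₂ (n₀ + 1)`. Since the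
differential maps `T n₀` isomorphically onto `T (n₀ + 1)`, the preimage `d⁻¹ W` is a complement
of `T n₀`; this is the change of basis subtracting `d⁻¹ ∘ β` from the splitting in degree `n₀`.
Keeping everything in the other degrees gives `Ẽ`, a subcomplex because `d ∘ d = 0`, and
`T' = T`.
-/

theorem IsCompl.isCompl_sup_of_sup_eq {α : Type*} [Lattice α] [BoundedOrder α]
    [IsModularLattice α] {a b s c : α} (hsc : IsCompl s c) (hab : Disjoint a b)
    (hs : a ⊔ b = s) : IsCompl (a ⊔ c) b := by
  constructor
  · rw [disjoint_iff, ← le_bot_iff]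
    calc (a ⊔ c) ⊓ b ≤ (a ⊔ c) ⊓ s ⊓ b :=
          le_inf (inf_le_inf_left _ (hs ▸ le_sup_right)) inf_le_right
      _ = (a ⊔ c ⊓ s) ⊓ b := by rw [sup_inf_assoc_of_le c (hs ▸ le_sup_left)]
      _ = a ⊓ b := by rw [inf_comm c, hsc.inf_eq_bot, sup_bot_eq]
      _ = ⊥ := hab.eq_bot
  · rw [codisjoint_iff, sup_right_comm, hs, hsc.sup_eq_top]

theorem Submodule.isCompl_comap_of_map_eq {R M N : Type*} [Semiring R] [AddCommGroup M]
    [Module R M] [AddCommGroup N] [Module R N] {g : M →ₗ[R] N} {A : Submodule R M}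
    {B W : Submodule R N} (hWB : IsCompl W B) (hmap : A.map g = B)
    (hinj : Disjoint A (LinearMap.ker g)) : IsCompl (W.comap g) A := by
  constructor
  · rw [Submodule.disjoint_def]
    intro x hxW hxA
    have hgx : g x = 0 :=
      Submodule.disjoint_def.mp hWB.disjoint _ hxW (hmap ▸ Submodule.mem_map_of_mem hxA)
    exact Submodule.disjoint_def.mp hinj x hxA hgx
  · rw [codisjoint_iff, eq_top_iff]
    intro x _
    obtain ⟨w, hw, b, hb, hwb⟩ := Submodule.mem_sup.mp (hWB.sup_eq_top ▸ trivial : g x ∈ W ⊔ B)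
    obtain ⟨a, ha, rfl⟩ := Submodule.mem_map.mp (hmap ▸ hb)
    refine Submodule.mem_sup.mpr ⟨x - a, ?_, a, ha, sub_add_cancel x a⟩
    rwa [Submodule.mem_comap, map_sub, ← hwb, add_sub_cancel_right]

section Subcomplex

variable {R : Type*} [Semiring R] {M : ℤ → Type*} [∀ k, AddCommGroup (M k)]
  [∀ k, Module R (M k)] (d : ∀ k : ℤ, M k →ₗ[R] M (k + 1))

/-- The largest subcomplex contained in the graded submodule `U`. -/
def interiorSubcomplex (U : ∀ k : ℤ, Submodule R (M k)) (k : ℤ) : Submodule R (M k) :=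
  U k ⊓ (U (k + 1)).comap (d k)

theorem map_interiorSubcomplex_le (hdd : ∀ (k : ℤ) (x : M k), d (k + 1) (d k x) = 0)
    (U : ∀ k : ℤ, Submodule R (M k)) (k : ℤ) :
    (interiorSubcomplex d U k).map (d k) ≤ interiorSubcomplex d U (k + 1) := by
  rintro _ ⟨x, hx, rfl⟩
  exact ⟨hx.2, by simp [hdd]⟩

theorem le_interiorSubcomplex {S U : ∀ k : ℤ, Submodule R (M k)}
    (hSd : ∀ k, (S k).map (d k) ≤ S (k + 1)) (hSU : ∀ k, S k ≤ U k) (k : ℤ) :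
    S k ≤ interiorSubcomplex d U k :=
  fun _ hx => ⟨hSU k hx, hSU (k + 1) (hSd k (Submodule.mem_map_of_mem hx))⟩

theorem isCompl_interiorSubcomplex_update {T : ∀ k : ℤ, Submodule R (M k)} {n₀ : ℤ}
    {W : Submodule R (M (n₀ + 1))} (hW : IsCompl W (T (n₀ + 1)))
    (hTzero : ∀ k, k ≠ n₀ → k ≠ n₀ + 1 → T k = ⊥)
    (hTonto : (T n₀).map (d n₀) = T (n₀ + 1))
    (hTinj : Disjoint (T n₀) (LinearMap.ker (d n₀))) (k : ℤ) :
    IsCompl (interiorSubcomplex d (Function.update ⊤ (n₀ + 1) W) k) (T k) := by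
  by_cases hk₀ : k = n₀
  · subst hk₀
    simpa [interiorSubcomplex] using Submodule.isCompl_comap_of_map_eq hW hTonto hTinj
  by_cases hk₁ : k = n₀ + 1
  · subst hk₁
    simpa [interiorSubcomplex] using hW
  · have hk₂ : k + 1 ≠ n₀ + 1 := fun h => hk₀ (by omega)
    simpa [interiorSubcomplex, hk₁, hk₂, hTzero k hk₀ hk₁] using isCompl_top_bot

end Subcomplex

theorem gaussian_elimination_subcomplex_general
    {R : Type} [Ring R] (Mod : ℤ → Type)
    [∀ k, AddCommGroup (Mod k)] [∀ k, Module R (Mod k)]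
    (d : ∀ k : ℤ, Mod k →ₗ[R] Mod (k + 1))
    (hdd : ∀ (k : ℤ) (x : Mod k), d (k + 1) (d k x) = 0)
    (S S₂ T : ∀ k : ℤ, Submodule R (Mod k))
    (hS₂d : ∀ k, Submodule.map (d k) (S₂ k) ≤ S₂ (k + 1))
    (hTd : ∀ k, Submodule.map (d k) (T k) ≤ T (k + 1))
    (hSsummand : ∀ k, ∃ C : Submodule R (Mod k), IsCompl (S k) C)
    (hdecomp : ∀ k, S₂ k ⊓ T k = ⊥ ∧ S₂ k ⊔ T k = S k)
    (n₀ : ℤ) (hTzero : ∀ k, k ≠ n₀ → k ≠ n₀ + 1 → T k = ⊥)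
    (hTonto : Submodule.map (d n₀) (T n₀) = T (n₀ + 1))
    (hTinj : ∀ x ∈ T n₀, d n₀ x = 0 → x = 0) :
    ∃ (E' T' : ∀ k : ℤ, Submodule R (Mod k)) (f : ∀ k : ℤ, Mod k →ₗ[R] Mod k),
      (∀ k, Submodule.map (d k) (E' k) ≤ E' (k + 1)) ∧
      (∀ k, Submodule.map (d k) (T' k) ≤ T' (k + 1)) ∧
      (∀ k, IsCompl (E' k) (T' k)) ∧
      (∀ k, S₂ k ≤ E' k) ∧
      (∀ k, Submodule.map (f k) (T' k) = T k) ∧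
      (∀ k, ∀ x ∈ T' k, f k x = 0 → x = 0) ∧
      (∀ k, ∀ x ∈ T' k, f (k + 1) (d k x) = d k (f k x)) := by
  obtain ⟨C, hC⟩ := hSsummand (n₀ + 1)
  obtain ⟨hS₂T, hS₂TS⟩ := hdecomp (n₀ + 1)
  set W := S₂ (n₀ + 1) ⊔ C
  have hW : IsCompl W (T (n₀ + 1)) := hC.isCompl_sup_of_sup_eq (disjoint_iff.mpr hS₂T) hS₂TS
  set U : ∀ k, Submodule R (Mod k) := Function.update ⊤ (n₀ + 1) W with hU
  have hS₂U : ∀ k, S₂ k ≤ U k := by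
    intro k
    by_cases hk : k = n₀ + 1
    · subst hk
      rw [hU, Function.update_self]
      exact le_sup_left
    · simp [hU, hk]
  have hTinj' : Disjoint (T n₀) (LinearMap.ker (d n₀)) :=
    Submodule.disjoint_def.mpr fun x hx hker => hTinj x hx (LinearMap.mem_ker.mp hker)
  exact ⟨interiorSubcomplex d U, T, fun _ => LinearMap.id,
    map_interiorSubcomplex_le d hdd _, hTd,
    isCompl_interiorSubcomplex_update d hW hTzero hTonto hTinj',
    le_interiorSubcomplex d hS₂d hS₂U, fun _ => Submodule.map_id _, fun _ _ _ h => h,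
    fun _ _ _ => rfl⟩

theorem gaussian_elimination_subcomplex
    {R : Type} [Ring R] (Mod : ℤ → Type)
    [∀ k, AddCommGroup (Mod k)] [∀ k, Module R (Mod k)]
    (d : ∀ k : ℤ, Mod k →ₗ[R] Mod (k + 1))
    (hdd : ∀ (k : ℤ) (x : Mod k), d (k + 1) (d k x) = 0)
    (hbdd : ∃ a b : ℤ, ∀ k : ℤ, (k < a ∨ b < k) → ∀ x : Mod k, x = 0)
    (S S₂ T : ∀ k : ℤ, Submodule R (Mod k))
    (hSd : ∀ k, Submodule.map (d k) (S k) ≤ S (k + 1))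
    (hS₂d : ∀ k, Submodule.map (d k) (S₂ k) ≤ S₂ (k + 1))
    (hTd : ∀ k, Submodule.map (d k) (T k) ≤ T (k + 1))
    (hSsummand : ∀ k, ∃ C : Submodule R (Mod k), IsCompl (S k) C)
    (hdecomp : ∀ k, S₂ k ⊓ T k = ⊥ ∧ S₂ k ⊔ T k = S k)
    (n₀ : ℤ) (hTzero : ∀ k, k ≠ n₀ → k ≠ n₀ + 1 → T k = ⊥)
    (hTonto : Submodule.map (d n₀) (T n₀) = T (n₀ + 1))
    (hTinj : ∀ x ∈ T n₀, d n₀ x = 0 → x = 0) :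
    ∃ (E' T' : ∀ k : ℤ, Submodule R (Mod k)) (f : ∀ k : ℤ, Mod k →ₗ[R] Mod k),
      (∀ k, Submodule.map (d k) (E' k) ≤ E' (k + 1)) ∧
      (∀ k, Submodule.map (d k) (T' k) ≤ T' (k + 1)) ∧
      (∀ k, IsCompl (E' k) (T' k)) ∧
      (∀ k, S₂ k ≤ E' k) ∧
      (∀ k, Submodule.map (f k) (T' k) = T k) ∧
      (∀ k, ∀ x ∈ T' k, f k x = 0 → x = 0) ∧
      (∀ k, ∀ x ∈ T' k, f (k + 1) (d k x) = d k (f k x)) :=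
  gaussian_elimination_subcomplex_general Mod d hdd S S₂ T hS₂d hTd hSsummand hdecomp n₀ hTzero
    hTonto hTinj
end
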